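/- arXiv:1008.0114 — 4 statements merged into one kernel-verified Lean document; each statement's English description precedes it below -/
import Mathlib

section
/- Let X be an abelian group, t : X → X a group automorphism and s : X → X a group endomorphism satisfying s ∘ s = (id − t) ∘ s = s ∘ (id − t). Then the operation x ▷ y := t(x) + s(y) makes X a rack, with inverse operation x ▷⁻¹ y := t⁻¹(x) − t⁻¹(s(y)): for all x, y ∈ X one has (x ▷ y) ▷⁻¹ y = x = (x ▷⁻¹ y) ▷ y, and for all x, y, z ∈ X, (x ▷ y) ▷ z = (x ▷ z) ▷ (y ▷ z). This rack is called a (t,s)-rack. -/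
/-- The `(t,s)`-rack operation `x ▷ y = t x + s y` on an abelian group. -/
def tsAct {X : Type*} [AddCommGroup X] (t : X ≃+ X) (s : X →+ X) : X → X → X :=
  fun x y => t x + s y

/-- The inverse `(t,s)`-rack operation `x ▷⁻¹ y = t⁻¹ x − t⁻¹ (s y)`. -/
def tsInv {X : Type*} [AddCommGroup X] (t : X ≃+ X) (s : X →+ X) : X → X → X :=
  fun x y => t.symm x - t.symm (s y)

/-- If `X` is an abelian group, `t` a group automorphism and `s` a group
endomorphism with `s ∘ s = (id − t) ∘ s = s ∘ (id − t)`, then `x ▷ y := t x + s y`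
makes `X` a rack with inverse operation `x ▷⁻¹ y := t⁻¹ x − t⁻¹(s y)`:
`(x ▷ y) ▷⁻¹ y = x = (x ▷⁻¹ y) ▷ y` and `(x ▷ y) ▷ z = (x ▷ z) ▷ (y ▷ z)`. -/
theorem stmt_2 {X : Type*} [AddCommGroup X] (t : X ≃+ X) (s : X →+ X)
    (h1 : ∀ x : X, s (s x) = s x - t (s x))
    (h2 : ∀ x : X, s x - t (s x) = s (x - t x)) :
    (∀ x y : X, tsInv t s (tsAct t s x y) y = x ∧ tsAct t s (tsInv t s x y) y = x) ∧
    (∀ x y z : X, tsAct t s (tsAct t s x y) z =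
      tsAct t s (tsAct t s x z) (tsAct t s y z)) := by
  have hts : ∀ x : X, t (s x) = s (t x) := by
    intro x
    have := h2 x
    rw [map_sub] at this
    exact sub_right_inj.mp this
  constructor
  · intro x y
    constructor
    · simp only [tsInv, tsAct, map_add, t.symm_apply_apply]
      abel
    · simp only [tsInv, tsAct, map_sub, t.apply_symm_apply]
      abel
  · intro x y z
    simp only [tsAct, map_add]
    rw [h1 z, hts y]
    abel
end

section
/- Let X be a rack. Then the kink map π : X → X defined by π(x) = x ▷ x is a bijection of X. -/
/-- A rack: a set with a binary operation `act = ▷` such that for all `x y` there is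
a unique `z` with `x = z ▷ y`, and `(x ▷ y) ▷ z = (x ▷ z) ▷ (y ▷ z)`. -/
structure PaperRack (X : Type*) where
  act : X → X → X
  exu : ∀ x y : X, ∃! z : X, x = act z y
  dist : ∀ x y z : X, act (act x y) z = act (act x z) (act y z)

lemma rack_beta_inj {X : Type*} (R : PaperRack X) (y : X) :
    Function.Injective (fun z : X => R.act z y) := by
  intro a b h
  obtain ⟨z, _, hz⟩ := R.exu (R.act a y) y
  have ha := hz a rfl
  have hb := hz b (by simpa using h)
  rw [ha, hb]

/-- For any rack `X`, the kink map `π(x) = x ▷ x` is a bijection of `X`. -/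
theorem stmt_5 {X : Type*} (R : PaperRack X) :
    Function.Bijective (fun x : X => R.act x x) := by
  constructor
  · intro a b h
    simp only at h
    -- for all v, act v a = act v (act a a)
    have key : ∀ c v : X, R.act v c = R.act v (R.act c c) := by
      intro c v
      obtain ⟨u, hu, _⟩ := R.exu v c
      have := R.dist u c c
      rw [← hu] at this
      exact this
    have h1 : R.act b a = R.act b b := by rw [key a b, key b b, h]
    have h2 : R.act a a = R.act b b := h
    have : R.act a a = R.act b a := by rw [h2, h1]
    exact (rack_beta_inj R a this.symm).symm
  · intro c
    obtain ⟨a, ha, _⟩ := R.exu c c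
    -- ha : c = act a c; show act a a = c
    refine ⟨a, ?_⟩
    have : ∀ w, R.act w a = R.act w c := by
      intro w
      have hd := R.dist w a c
      rw [← ha] at hd
      exact rack_beta_inj R c hd
    simp only
    rw [this a, ← ha]
end

section
/- Let X be a rack, G an abelian group, and for each pair (x, y) ∈ X × X let t_{x,y} : G → G and s_{x,y} : G → G be group endomorphisms. Define an operation on X × G by (x, g) ▷ (y, h) := (x ▷ y, t_{x,y}(g) + s_{x,y}(h)). Then X × G with this operation is a rack if and only if (a) each t_{x,y} is bijective, and (b) for all x, y, z ∈ X the following hold as maps G → G: t_{x▷y,z} ∘ t_{x,y} = t_{x▷z,y▷z} ∘ t_{x,z}; t_{x▷y,z} ∘ s_{x,y} = s_{x▷z,y▷z} ∘ t_{y,z}; and s_{x▷y,z} = s_{x▷z,y▷z} ∘ s_{y,z} + t_{x▷z,y▷z} ∘ s_{x,z} (where the sum of two endomorphisms is taken pointwise). The resulting rack X × G is called an extension rack of X. -/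
/-- The extension operation on `X × G`:
`(x, g) ▷ (y, h) = (x ▷ y, t_{x,y}(g) + s_{x,y}(h))`. -/
def extAct {X G : Type*} [AddCommGroup G] (R : PaperRack X)
    (t s : X → X → (G →+ G)) : X × G → X × G → X × G :=
  fun p q => (R.act p.1 q.1, t p.1 q.1 p.2 + s p.1 q.1 q.2)

/-- For a rack `X`, an abelian group `G` and families of endomorphisms
`t_{x,y}, s_{x,y} : G → G`, the operation `(x,g) ▷ (y,h) = (x▷y, t_{x,y} g + s_{x,y} h)`
makes `X × G` a rack if and only if each `t_{x,y}` is bijective and the three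
extension-rack relations hold. -/
theorem stmt_8 {X G : Type*} [AddCommGroup G] (R : PaperRack X)
    (t s : X → X → (G →+ G)) :
    ((∀ p q : X × G, ∃! r : X × G, p = extAct R t s r q) ∧
     (∀ p q r : X × G, extAct R t s (extAct R t s p q) r =
        extAct R t s (extAct R t s p r) (extAct R t s q r))) ↔
    ((∀ x y : X, Function.Bijective (t x y)) ∧
     (∀ x y z : X, ∀ g : G,
        t (R.act x y) z (t x y g) = t (R.act x z) (R.act y z) (t x z g)) ∧
     (∀ x y z : X, ∀ g : G,
        t (R.act x y) z (s x y g) = s (R.act x z) (R.act y z) (t y z g)) ∧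
     (∀ x y z : X, ∀ g : G,
        s (R.act x y) z g = s (R.act x z) (R.act y z) (s y z g)
          + t (R.act x z) (R.act y z) (s x z g))) := by
  constructor
  · rintro ⟨hexu, hdist⟩
    have key : ∀ x y z : X, ∀ g h k : G,
        t (R.act x y) z (t x y g + s x y h) + s (R.act x y) z k =
        t (R.act x z) (R.act y z) (t x z g + s x z k)
          + s (R.act x z) (R.act y z) (t y z h + s y z k) := by
      intro x y z g h k
      have := congrArg Prod.snd (hdist (x, g) (y, h) (z, k))
      simpa [extAct] using this
    refine ⟨?_, ?_, ?_, ?_⟩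
    · intro x y
      constructor
      · intro a b hab
        have e1 : ((R.act x y, t x y a) : X × G) = extAct R t s (x, a) (y, 0) := by
          simp [extAct]
        have e2 : ((R.act x y, t x y a) : X × G) = extAct R t s (x, b) (y, 0) := by
          simp [extAct, hab]
        have := (hexu (R.act x y, t x y a) (y, 0)).unique e1 e2
        exact congrArg Prod.snd this
      · intro g'
        obtain ⟨r, hr, _⟩ := hexu (R.act x y, g') (y, 0)
        have h1 : R.act x y = R.act r.1 y := congrArg Prod.fst hr
        have h2 : g' = t r.1 y r.2 + s r.1 y 0 := congrArg Prod.snd hr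
        have hr1 : r.1 = x := (R.exu (R.act x y) y).unique h1 rfl
        refine ⟨r.2, ?_⟩
        rw [hr1] at h2
        simpa using h2.symm
    · intro x y z g
      have := key x y z g 0 0
      simpa using this
    · intro x y z h
      have := key x y z 0 h 0
      simpa using this
    · intro x y z k
      have := key x y z 0 0 k
      simp at this
      rw [this]; abel
  · rintro ⟨hbij, h1, h2, h3⟩
    constructor
    · intro p q
      obtain ⟨z, hz, hzu⟩ := R.exu p.1 q.1
      obtain ⟨k, hk⟩ := (hbij z q.1).2 (p.2 - s z q.1 q.2)
      refine ⟨(z, k), ?_, ?_⟩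
      · refine Prod.ext hz ?_
        show p.2 = t z q.1 k + s z q.1 q.2
        rw [hk]; abel
      · rintro ⟨z', k'⟩ hr
        have hzz : z' = z := hzu z' (congrArg Prod.fst hr)
        subst hzz
        have hk' : p.2 = t z' q.1 k' + s z' q.1 q.2 := congrArg Prod.snd hr
        have : t z' q.1 k' = t z' q.1 k := by
          rw [hk]; rw [hk'] ; abel
        exact Prod.ext rfl ((hbij z' q.1).1 this)
    · rintro ⟨x, g⟩ ⟨y, h⟩ ⟨z, k⟩
      refine Prod.ext (R.dist x y z) ?_
      show t (R.act x y) z (t x y g + s x y h) + s (R.act x y) z k =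
        t (R.act x z) (R.act y z) (t x z g + s x z k)
          + s (R.act x z) (R.act y z) (t y z h + s y z k)
      rw [map_add, map_add, map_add, h1 x y z g, h2 x y z h, h3 x y z k]
      abel
end

section
/- Let X be a rack whose kink map π satisfies π^N = id_X for a positive integer N, and let G be an abelian group with automorphism t and endomorphism s satisfying s ∘ s = (id − t) ∘ s = s ∘ (id − t) and (t + s)^N = id_G. Then the constant families t_{x,y} := t, s_{x,y} := s (for all x, y ∈ X) satisfy the three extension-rack relations, and the product X × G with operation (x, g) ▷ (y, h) = (x ▷ y, t(g) + s(h)) is a rack whose kink map Π satisfies Π^N = id_{X×G}. -/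
/-- The extension operation on `X × G` with constant families:
`(x, g) ▷ (y, h) = (x ▷ y, t(g) + s(h))`. -/
def extActConst {X G : Type*} [AddCommGroup G] (act : X → X → X)
    (t : G ≃+ G) (s : G →+ G) : X × G → X × G → X × G :=
  fun p q => (act p.1 q.1, t p.2 + s q.2)

private lemma prodmap_iter {A B : Type*} (f : A → A) (g : B → B) (n : ℕ) :
    (Prod.map f g)^[n] = Prod.map (f^[n]) (g^[n]) := by
  induction n with
  | zero => rfl
  | succ n ih =>
    rw [Function.iterate_succ', Function.iterate_succ', Function.iterate_succ', ih]
    rfl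

/-- Let `X` be a rack whose kink map `π` satisfies `π^[N] = id` for a
positive `N`, and `G` an abelian group with automorphism `t` and endomorphism `s`
satisfying `s ∘ s = (id − t) ∘ s = s ∘ (id − t)` and `(t + s)^[N] = id`. Then the
constant families `t_{x,y} := t`, `s_{x,y} := s` satisfy the three extension-rack
relations, `X × G` with `(x,g) ▷ (y,h) = (x▷y, t g + s h)` is a rack, and its kink
map `Π` satisfies `Π^[N] = id`. -/
theorem stmt_11 {X G : Type*} [AddCommGroup G] (R : PaperRack X)
    (N : ℕ) (hN : 0 < N)
    (π : X → X) (hπ : π = fun x : X => R.act x x) (hπN : π^[N] = id)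
    (t : G ≃+ G) (s : G →+ G)
    (h1 : ∀ g : G, s (s g) = s g - t (s g))
    (h2 : ∀ g : G, s g - t (s g) = s (g - t g))
    (hts : (fun g : G => t g + s g)^[N] = id) :
    (∀ x y z : X, ∀ g : G, t (t g) = t (t g)) ∧
    (∀ x y z : X, ∀ g : G, t (s g) = s (t g)) ∧
    (∀ x y z : X, ∀ g : G, s g = s (s g) + t (s g)) ∧
    (∀ p q : X × G, ∃! r : X × G, p = extActConst R.act t s r q) ∧
    (∀ p q r : X × G, extActConst R.act t s (extActConst R.act t s p q) r =
      extActConst R.act t s (extActConst R.act t s p r) (extActConst R.act t s q r)) ∧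
    (fun p : X × G => extActConst R.act t s p p)^[N] = id := by
  have hst : ∀ g : G, t (s g) = s (t g) := by
    intro g
    have h3 : s g - t (s g) = s g - s (t g) := by
      rw [h2 g, map_sub]
    exact sub_right_inj.mp h3
  have h4 : ∀ g : G, s g = s (s g) + t (s g) := by
    intro g
    rw [h1 g]
    abel
  refine ⟨fun _ _ _ _ => rfl, fun _ _ _ g => hst g, fun _ _ _ g => h4 g, ?_, ?_, ?_⟩
  · intro p q
    obtain ⟨z, hz, hzu⟩ := R.exu p.1 q.1
    refine ⟨(z, t.symm (p.2 - s q.2)), ?_, ?_⟩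
    · simp only [extActConst, AddEquiv.apply_symm_apply]
      refine Prod.ext hz ?_
      simp only
      rw [sub_add_cancel]
    · rintro ⟨z', k⟩ h
      have h1' := congrArg Prod.fst h
      have h2' := congrArg Prod.snd h
      simp only [extActConst] at h1' h2'
      refine Prod.ext (hzu _ h1') ?_
      simp only
      rw [h2']
      simp [add_sub_cancel_right]
  · intro p q r
    simp only [extActConst, Prod.mk.injEq]
    refine ⟨R.dist _ _ _, ?_⟩
    simp only [map_add]
    rw [hst q.2, hst r.2]
    have hr := h4 r.2
    rw [hst r.2] at hr
    conv_lhs => rw [hr]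
    abel
  · have hPi : (fun p : X × G => extActConst R.act t s p p) =
        Prod.map π (fun g => t g + s g) := by
      funext p
      simp [extActConst, hπ, Prod.map]
    rw [hPi, prodmap_iter, hπN, hts]
    rfl
end
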